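/- Let p be a prime, k a perfect field of characteristic p, W = W(k) the ring of p-typical Witt vectors of k, and R = W[u,t]/(ut − p). Then p is a nonzerodivisor in R; that is, for r ∈ R, p·r = 0 implies r = 0. -/

import Mathlib

/-- The ideal `(ut - p)` in the polynomial ring `W(k)[u,t]`. -/
noncomputable abbrev NygaardIdeal (p : ℕ) [Fact p.Prime] (k : Type*) [CommRing k] :
    Ideal (MvPolynomial (Fin 2) (WittVector p k)) :=
  Ideal.span {MvPolynomial.X 0 * MvPolynomial.X 1 -
    (p : MvPolynomial (Fin 2) (WittVector p k))}

/-- The ring `R = W(k)[u,t]/(ut - p)`. -/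
noncomputable abbrev NygaardRing (p : ℕ) [Fact p.Prime] (k : Type*) [CommRing k] : Type _ :=
  MvPolynomial (Fin 2) (WittVector p k) ⧸ NygaardIdeal p k

/-!
`W(k)` is a discrete valuation ring with uniformizer `p`, so `p` is prime in `W(k)`, hence in
`W(k)[u,t]`. It does not divide `ut - p`, since otherwise it would divide `u` or `t`. So from
`p f = (ut - p) g` one gets `p ∣ g`, and cancelling `p` shows `f ∈ (ut - p)`.
-/

theorem Prime.mem_span_singleton_of_mul_mem {A : Type*} [CommRing A] [IsDomain A] {π b x : A}
    (hπ : Prime π) (hb : ¬π ∣ b) (h : π * x ∈ Ideal.span {b}) : x ∈ Ideal.span {b} := by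
  obtain ⟨g, hg⟩ := Ideal.mem_span_singleton'.mp h
  obtain ⟨g', rfl⟩ : π ∣ g :=
    (hπ.dvd_or_dvd ⟨x, by rw [hg, mul_comm]⟩).resolve_right hb
  refine Ideal.mem_span_singleton'.mpr ⟨g', mul_left_cancel₀ hπ.ne_zero ?_⟩
  rw [← hg]
  ring

namespace MvPolynomial

variable {σ R : Type*}

theorem not_C_dvd_X [CommSemiring R] {r : R} (hr : ¬IsUnit r) (i : σ) :
    ¬C r ∣ (X i : MvPolynomial σ R) := by
  intro h
  have := (C_dvd_iff_dvd_coeff r (X i)).mp h (Finsupp.single i 1)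
  rw [coeff_X_same] at this
  exact hr (isUnit_of_dvd_one this)

theorem not_C_dvd_X_mul_X_sub_C [CommRing R] {r : R} (hr : Prime r) (i j : σ) :
    ¬C r ∣ (X i * X j - C r : MvPolynomial σ R) := by
  intro h
  rcases ((prime_C_iff σ).mpr hr).dvd_or_dvd (dvd_sub_self_right.mp h) with hi | hj
  exacts [not_C_dvd_X hr.not_isUnit i hi, not_C_dvd_X hr.not_isUnit j hj]

end MvPolynomial

theorem p_nonzerodivisor_nygaardRing (p : ℕ) [Fact p.Prime]
    (k : Type*) [Field k] [CharP k p] [PerfectRing k p] :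
    ∀ r : NygaardRing p k, (p : NygaardRing p k) * r = 0 → r = 0 := by
  intro r hr
  obtain ⟨f, rfl⟩ := Ideal.Quotient.mk_surjective r
  rw [← map_natCast (Ideal.Quotient.mk _), ← map_mul, Ideal.Quotient.eq_zero_iff_mem] at hr
  rw [Ideal.Quotient.eq_zero_iff_mem]
  have hp : Prime (p : WittVector p k) := (WittVector.irreducible p).prime
  have hpC := (MvPolynomial.prime_C_iff (Fin 2)).mpr hp
  have hnd := MvPolynomial.not_C_dvd_X_mul_X_sub_C hp (0 : Fin 2) 1
  rw [map_natCast] at hpC hnd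
  exact hpC.mem_span_singleton_of_mul_mem hnd hr
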